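/- arXiv:2209.00771 — 5 statements merged into one kernel-verified Lean document; each statement's English description precedes it below -/
import Mathlib

section
/- If θ is performatively stable and the performative shifts are uniformly bounded, W(D(θ), D(θ')) ≤ B for all θ', then the suboptimality of θ with respect to the performative risk is bounded: PR(θ) - inf_{θ'} PR(θ') ≤ L·B. -/
open RealInnerProductSpace

/-- if θ is performatively stable and performative shifts are
uniformly bounded by B in Wasserstein distance, then
PR(θ) - inf_{θ'∈Θ} PR(θ') ≤ L·B. -/
theorem stmt2 {d : ℕ} {P : Type*}
    (Θ : Set (EuclideanSpace ℝ (Fin d)))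
    (D : EuclideanSpace ℝ (Fin d) → P) (W : P → P → ℝ)
    (DPR : EuclideanSpace ℝ (Fin d) → EuclideanSpace ℝ (Fin d) → ℝ)
    (L B : ℝ) (hL : 0 ≤ L)
    -- Kantorovich–Rubinstein bound from L-Lipschitzness of ℓ(·;θ') in z:
    (hKR : ∀ θ₁ θ₂ x, |DPR θ₁ x - DPR θ₂ x| ≤ L * W (D θ₁) (D θ₂))
    (θ : EuclideanSpace ℝ (Fin d)) (hθ : θ ∈ Θ)
    -- θ is performatively stable:
    (hstable : ∀ θ' ∈ Θ, DPR θ θ ≤ DPR θ θ')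
    -- bounded performative shifts:
    (hB : ∀ θ' ∈ Θ, W (D θ) (D θ') ≤ B) :
    DPR θ θ - sInf ((fun θ' => DPR θ' θ') '' Θ) ≤ L * B := by
  have h : DPR θ θ - L * B ≤ sInf ((fun θ' => DPR θ' θ') '' Θ) := by
    apply le_csInf (Set.Nonempty.image _ ⟨θ, hθ⟩)
    rintro b ⟨θ', hθ', rfl⟩
    have h1 := hstable θ' hθ'
    have h2 := hKR θ θ' θ'
    have h3 := abs_le.mp h2
    have h4 : L * W (D θ) (D θ') ≤ L * B := mul_le_mul_of_nonneg_left (hB θ' hθ') hL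
    simp only
    linarith [h3.1, h3.2]
  linarith
end

section
/- Suppose θ is performatively stable, the distribution map is ε-sensitive (W(D(θ), D(θ')) ≤ ε‖θ - θ'‖ for all θ, θ'), and Δ_θ(θ') := DPR(θ, θ') - PR(θ) ≥ γ‖θ - θ'‖² for all θ'. Then any performative optimum θ_PO satisfies ‖θ_PO - θ‖ ≤ Lε/γ. -/
open RealInnerProductSpace

/-- stable θ, ε-sensitive distribution map, and quadratic growth
Δ_θ(θ') ≥ γ‖θ - θ'‖² imply any performative optimum θ_PO satisfies
‖θ_PO - θ‖ ≤ Lε/γ. -/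
theorem stmt4 {d : ℕ} {P : Type*}
    (Θ : Set (EuclideanSpace ℝ (Fin d)))
    (D : EuclideanSpace ℝ (Fin d) → P) (W : P → P → ℝ)
    (DPR : EuclideanSpace ℝ (Fin d) → EuclideanSpace ℝ (Fin d) → ℝ)
    (L ε γ : ℝ) (hL : 0 < L) (hε : 0 < ε) (hγ : 0 < γ)
    -- decoupling inequality from L-Lipschitzness of ℓ in z (KR duality):
    (hdec : ∀ θ ∈ Θ, ∀ θ' ∈ Θ, DPR θ' θ' ≥ DPR θ θ + (DPR θ θ' - DPR θ θ) - L * W (D θ) (D θ'))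
    -- ε-sensitivity of the distribution map:
    (hsens : ∀ θ θ', W (D θ) (D θ') ≤ ε * ‖θ - θ'‖)
    (θ : EuclideanSpace ℝ (Fin d)) (hθ : θ ∈ Θ)
    -- θ is performatively stable:
    (hstable : ∀ θ' ∈ Θ, DPR θ θ ≤ DPR θ θ')
    -- quadratic growth of the suboptimality gap:
    (hQG : ∀ θ' ∈ Θ, DPR θ θ' - DPR θ θ ≥ γ * ‖θ - θ'‖ ^ 2)
    (θPO : EuclideanSpace ℝ (Fin d)) (hθPO : θPO ∈ Θ)
    -- θPO is performatively optimal: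
    (hPO : ∀ θ' ∈ Θ, DPR θPO θPO ≤ DPR θ' θ') :
    ‖θPO - θ‖ ≤ L * ε / γ := by
  set r := ‖θ - θPO‖ with hr
  have h1 := hdec θ hθ θPO hθPO
  have h2 := hsens θ θPO
  have h3 := hQG θPO hθPO
  have h4 := hPO θ hθ
  have key : γ * r ^ 2 ≤ L * (ε * r) := by
    nlinarith [mul_le_mul_of_nonneg_left h2 hL.le]
  have hrn : 0 ≤ r := norm_nonneg _
  have hnorm : ‖θPO - θ‖ = r := by rw [hr, norm_sub_rev]
  rw [hnorm]
  rcases eq_or_lt_of_le hrn with h0 | h0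
  · rw [← h0]; positivity
  · rw [le_div_iff₀ hγ]; nlinarith
end

section
/- (Weak convexity of PR under WSC of DPR.) Assume: (a) ℓ is β-smooth in z, i.e., ‖∇_θ ℓ(z;θ) - ∇_θ ℓ(z';θ)‖ ≤ β‖z - z'‖ for all z, z', θ; (b) the distribution map D is ε-sensitive in Wasserstein-1 distance; (c) mixture dominance holds: DPR(θ_PO, θ) ≥ PR(θ) + ⟨E_{z∼D(θ)}[ℓ(z;θ)∇_θ log p_θ(z)], θ_PO - θ⟩ for all θ; (d) DPR(θ_PO, ·) is μ-weakly-strongly convex with minimizer θ* = θ_PO (i.e., θ_PO is also performatively stable): DPR(θ_PO, θ_PO) ≥ DPR(θ_PO, θ) + ⟨∇_θ DPR(θ_PO, θ), θ_PO - θ⟩ + (μ/2)‖θ_PO - θ‖². If μ/2 ≥ βε, then PR is weakly convex towards θ_PO: PR(θ_PO) ≥ PR(θ) + ⟨∇PR(θ), θ_PO - θ⟩ for all θ ∈ Θ. -/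
open RealInnerProductSpace

/-- Weak convexity of PR under WSC of DPR.  Here
`g₁ θ = E_{z∼D(θ)} ∇_θ ℓ(z;θ)`, `g₂ θ = E_{z∼D(θ)}[ℓ(z;θ)∇_θ log p_θ(z)]`,
and `gD θ = ∇_θ DPR(θ_PO, θ) = E_{z∼D(θ_PO)} ∇_θ ℓ(z;θ)`.
β-smoothness of ℓ in z combined with ε-sensitivity of D yields `hsmooth_sens`;
mixture dominance is `hmix`; μ-weak strong convexity of DPR(θ_PO, ·) with
minimizer θ_PO (θ_PO also performatively stable) is `hWSC`.
If μ/2 ≥ βε then PR is weakly convex towards θ_PO. -/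
theorem stmt6 {d : ℕ} {P : Type*}
    (Θ : Set (EuclideanSpace ℝ (Fin d))) (hΘc : IsClosed Θ) (hΘv : Convex ℝ Θ)
    (D : EuclideanSpace ℝ (Fin d) → P) (W : P → P → ℝ)
    (DPR : EuclideanSpace ℝ (Fin d) → EuclideanSpace ℝ (Fin d) → ℝ)
    (β ε μ : ℝ) (hβ : 0 ≤ β) (hε : 0 ≤ ε)
    (PR : EuclideanSpace ℝ (Fin d) → ℝ) (hPR : ∀ θ, PR θ = DPR θ θ)
    (g₁ g₂ gD : EuclideanSpace ℝ (Fin d) → EuclideanSpace ℝ (Fin d))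
    -- ∇PR decomposes as g₁ + g₂:
    (hgrad : ∀ θ, gradient PR θ = g₁ θ + g₂ θ)
    -- gD θ is the gradient of DPR(θ_PO, ·) at θ:
    (θPO : EuclideanSpace ℝ (Fin d)) (hθPO : θPO ∈ Θ)
    (hgD : ∀ θ, HasGradientAt (fun x => DPR θPO x) (gD θ) θ)
    -- θPO is performatively optimal:
    (hPO : ∀ θ ∈ Θ, PR θPO ≤ PR θ)
    -- ε-sensitivity of the distribution map:
    (hsens : ∀ θ θ', W (D θ) (D θ') ≤ ε * ‖θ - θ'‖)
    -- β-smoothness of ℓ in z combined with ε-sensitivity: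
    (hsmooth_sens : ∀ θ, ‖g₁ θ - gD θ‖ ≤ β * ε * ‖θ - θPO‖)
    -- mixture dominance:
    (hmix : ∀ θ, DPR θPO θ ≥ PR θ + ⟪g₂ θ, θPO - θ⟫)
    -- μ-weak strong convexity of DPR(θ_PO, ·) with minimizer θ* = θ_PO:
    (hstable : ∀ θ, DPR θPO θPO ≤ DPR θPO θ)
    (hWSC : ∀ θ, DPR θPO θPO ≥ DPR θPO θ + ⟪gD θ, θPO - θ⟫ + μ / 2 * ‖θPO - θ‖ ^ 2)
    (hμ : μ / 2 ≥ β * ε) :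
    ∀ θ ∈ Θ, PR θPO ≥ PR θ + ⟪gradient PR θ, θPO - θ⟫ := by
  intro θ hθ
  have h1 := hWSC θ
  have h2 := hmix θ
  have h3 := hsmooth_sens θ
  have hdecomp : ⟪gradient PR θ, θPO - θ⟫ =
      ⟪gD θ, θPO - θ⟫ + ⟪g₂ θ, θPO - θ⟫ + ⟪g₁ θ - gD θ, θPO - θ⟫ := by
    rw [hgrad θ]
    simp [inner_add_left, inner_sub_left]
    ring
  have hcs : ⟪g₁ θ - gD θ, θPO - θ⟫ ≤ β * ε * ‖θ - θPO‖ * ‖θPO - θ‖ := by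
    calc ⟪g₁ θ - gD θ, θPO - θ⟫ ≤ ‖g₁ θ - gD θ‖ * ‖θPO - θ‖ :=
          real_inner_le_norm _ _
      _ ≤ β * ε * ‖θ - θPO‖ * ‖θPO - θ‖ := by
          apply mul_le_mul_of_nonneg_right h3 (norm_nonneg _)
  have hnorm : ‖θ - θPO‖ = ‖θPO - θ‖ := by rw [norm_sub_rev]
  rw [hPR θPO, hPR θ] at *
  rw [hdecomp]
  rw [hnorm] at hcs
  have key : β * ε * ‖θPO - θ‖ * ‖θPO - θ‖ ≤ μ / 2 * ‖θPO - θ‖ ^ 2 := by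
    rw [sq]; nlinarith [mul_self_nonneg (‖θPO - θ‖)]
  linarith
end

section
/- (RSI of PR, far-from-optimum case.) Assume: (a) ℓ is L-Lipschitz in z and β-smooth in z; (b) D is ε-sensitive; (c) mixture dominance: DPR(θ_PO, θ) ≥ PR(θ) + ⟨∇₂, θ_PO - θ⟩ where ∇₂ := E_{z∼D(θ)}[ℓ(z;θ)∇_θ log p_θ(z)]; (d) DPR(θ_PO, ·) satisfies the μ-restricted secant inequality with unique minimizer θ_PO: ⟨∇_θ DPR(θ_PO, θ), θ - θ_PO⟩ ≥ μ‖θ_PO - θ‖². Then for all θ with ‖θ_PO - θ‖ ≥ 1 and μ ≥ (β + L)ε, the performative risk satisfies ⟨∇PR(θ), θ - θ_PO⟩ ≥ (μ - (β+L)ε)‖θ_PO - θ‖². -/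
open RealInnerProductSpace

/-- RSI of PR, far-from-optimum case.  With
`g₁ θ = E_{z∼D(θ)} ∇_θ ℓ(z;θ)` (∇₁), `g₂ θ = E_{z∼D(θ)}[ℓ(z;θ)∇_θ log p_θ(z)]` (∇₂),
`gD θ = ∇_θ DPR(θ_PO, θ)`:  β-smoothness + ε-sensitivity give `hsmooth_sens`,
L-Lipschitzness + ε-sensitivity give `hLip_sens`, mixture dominance is `hmix`,
and DPR(θ_PO, ·) satisfies the μ-RSI with unique minimizer θ_PO. Then for all θ
with ‖θ_PO - θ‖ ≥ 1, ⟨∇PR(θ), θ - θ_PO⟩ ≥ (μ - (β+L)ε)‖θ_PO - θ‖². -/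
theorem stmt7 {d : ℕ} {P : Type*}
    (Θ : Set (EuclideanSpace ℝ (Fin d)))
    (D : EuclideanSpace ℝ (Fin d) → P) (W : P → P → ℝ)
    (DPR : EuclideanSpace ℝ (Fin d) → EuclideanSpace ℝ (Fin d) → ℝ)
    (L β ε μ : ℝ) (hL : 0 ≤ L) (hβ : 0 ≤ β) (hε : 0 ≤ ε)
    (PR : EuclideanSpace ℝ (Fin d) → ℝ) (hPR : ∀ θ, PR θ = DPR θ θ)
    (g₁ g₂ gD : EuclideanSpace ℝ (Fin d) → EuclideanSpace ℝ (Fin d))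
    (hgrad : ∀ θ, gradient PR θ = g₁ θ + g₂ θ)
    (θPO : EuclideanSpace ℝ (Fin d)) (hθPO : θPO ∈ Θ)
    (hgD : ∀ θ, HasGradientAt (fun x => DPR θPO x) (gD θ) θ)
    -- θPO is performatively optimal and performatively stable:
    (hPO : ∀ θ ∈ Θ, PR θPO ≤ PR θ)
    (hstable : ∀ θ, DPR θPO θPO ≤ DPR θPO θ)
    -- ε-sensitivity:
    (hsens : ∀ θ θ', W (D θ) (D θ') ≤ ε * ‖θ - θ'‖)
    -- β-smoothness of ℓ in z combined with ε-sensitivity: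
    (hsmooth_sens : ∀ θ, ‖g₁ θ - gD θ‖ ≤ β * ε * ‖θ - θPO‖)
    -- L-Lipschitzness of ℓ in z combined with ε-sensitivity:
    (hLip_sens : ∀ θ, |DPR θPO θ - PR θ| ≤ L * ε * ‖θPO - θ‖)
    -- mixture dominance:
    (hmix : ∀ θ, DPR θPO θ ≥ PR θ + ⟪g₂ θ, θPO - θ⟫)
    -- μ-RSI of DPR(θ_PO, ·) with unique minimizer θ_PO:
    (hRSI : ∀ θ, ⟪gD θ, θ - θPO⟫ ≥ μ * ‖θPO - θ‖ ^ 2)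
    (hμ : μ ≥ (β + L) * ε) :
    ∀ θ, ‖θPO - θ‖ ≥ 1 →
      ⟪gradient PR θ, θ - θPO⟫ ≥ (μ - (β + L) * ε) * ‖θPO - θ‖ ^ 2 := by
  intro θ hθ
  have hn : ‖θ - θPO‖ = ‖θPO - θ‖ := norm_sub_rev _ _
  have hcs : |⟪g₁ θ - gD θ, θ - θPO⟫| ≤ ‖g₁ θ - gD θ‖ * ‖θ - θPO‖ :=
    abs_real_inner_le_norm _ _
  have h1 : ⟪g₁ θ, θ - θPO⟫ ≥ ⟪gD θ, θ - θPO⟫ - β * ε * ‖θPO - θ‖ ^ 2 := by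
    have hs := hsmooth_sens θ
    have hsplit : ⟪g₁ θ, θ - θPO⟫ = ⟪gD θ, θ - θPO⟫ + ⟪g₁ θ - gD θ, θ - θPO⟫ := by
      rw [inner_sub_left]; ring
    have habs := neg_abs_le (⟪g₁ θ - gD θ, θ - θPO⟫ : ℝ)
    rw [hn] at hcs hs
    nlinarith [norm_nonneg (θPO - θ), norm_nonneg (g₁ θ - gD θ)]
  have h2 : ⟪g₂ θ, θ - θPO⟫ ≥ -(L * ε * ‖θPO - θ‖ ^ 2) := by
    have hm := hmix θ
    have hl := hLip_sens θ
    have habs := le_abs_self (DPR θPO θ - PR θ)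
    have heq : ⟪g₂ θ, θ - θPO⟫ = -⟪g₂ θ, θPO - θ⟫ := by
      rw [show θ - θPO = -(θPO - θ) by abel, inner_neg_right]
    have hLε : L * ε * ‖θPO - θ‖ ≤ L * ε * ‖θPO - θ‖ ^ 2 := by
      nlinarith [mul_nonneg (mul_nonneg (mul_nonneg hL hε) (norm_nonneg (θPO - θ)))
        (sub_nonneg.mpr hθ)]
    linarith
  have hrsi := hRSI θ
  rw [hgrad, inner_add_left]
  nlinarith
end

section
/- Suppose θ is performatively stable and for all θ' the condition Δ_θ(θ') ≥ L·W(D(θ), D(θ')) fails only outside a set S containing all global minimizers of PR; i.e., Δ_θ(θ') ≥ L·W(D(θ), D(θ')) holds for all θ' ∈ S and argmin PR ⊆ S. Then PR(θ) = min_{θ'∈Θ} PR(θ'). -/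
open RealInnerProductSpace

/-- if θ is performatively stable and the gap condition
Δ_θ(θ') ≥ L·W(D(θ),D(θ')) holds on a set S containing all global minimizers of
PR on Θ, then PR(θ) = min_{θ'∈Θ} PR(θ'). -/
theorem stmt13 {d : ℕ} {P : Type*}
    (Θ : Set (EuclideanSpace ℝ (Fin d)))
    (D : EuclideanSpace ℝ (Fin d) → P) (W : P → P → ℝ)
    (DPR : EuclideanSpace ℝ (Fin d) → EuclideanSpace ℝ (Fin d) → ℝ)
    (L : ℝ) (hL : 0 ≤ L)
    -- decoupling inequality (from L-Lipschitzness of ℓ in z and KR duality):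
    (hdec : ∀ θ ∈ Θ, ∀ θ' ∈ Θ,
      DPR θ' θ' ≥ DPR θ θ + (DPR θ θ' - DPR θ θ) - L * W (D θ) (D θ'))
    (θ : EuclideanSpace ℝ (Fin d)) (hθ : θ ∈ Θ)
    -- θ is performatively stable:
    (hstable : ∀ θ' ∈ Θ, DPR θ θ ≤ DPR θ θ')
    (S : Set (EuclideanSpace ℝ (Fin d)))
    -- S contains every global minimizer of PR on Θ:
    (hminS : ∀ θ'' ∈ Θ, (∀ y ∈ Θ, DPR θ'' θ'' ≤ DPR y y) → θ'' ∈ S)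
    -- the gap condition holds on S:
    (hgapS : ∀ θ' ∈ S, θ' ∈ Θ → DPR θ θ' - DPR θ θ ≥ L * W (D θ) (D θ'))
    -- PR attains its minimum on Θ:
    (hattain : ∃ θm ∈ Θ, ∀ y ∈ Θ, DPR θm θm ≤ DPR y y) :
    ∀ θ' ∈ Θ, DPR θ θ ≤ DPR θ' θ' := by
  intro θ' hθ'
  obtain ⟨θm, hθm, hmin⟩ := hattain
  have hS := hminS θm hθm hmin
  have hgap := hgapS θm hS hθm
  have hd := hdec θ hθ θm hθm
  have : DPR θ θ ≤ DPR θm θm := by linarith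
  exact le_trans this (hmin θ' hθ')
end
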